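/- Lemma 5.3: Let q and q'' be integral nonsingular ternary quadratic forms with matrices Q, Q'', and let n be the associated quaternary quadratic form of q (matrix N). For any A, D ∈ R(q,q''): A ∈ E(q)·D if and only if Φ_A ∈ E(n)·Φ_D. -/
import Mathlib


open Matrix

/-- An integral quadratic form encoded by its matrix: symmetric with even diagonal. -/
def IsIntegralQF {m : ℕ} (Q : Matrix (Fin m) (Fin m) ℤ) : Prop :=
  Q.IsSymm ∧ ∀ i, 2 ∣ Q i i

/-- `R(q,q')`: integral representations. -/
def Reps {m n : ℕ} (Q : Matrix (Fin m) (Fin m) ℤ) (Q' : Matrix (Fin n) (Fin n) ℤ) :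
    Set (Matrix (Fin m) (Fin n) ℤ) :=
  {A | Aᵀ * Q * A = Q'}

/-- `E(q)`: the group of units of the form with matrix `Q`. -/
def UnitsOf {m : ℕ} (Q : Matrix (Fin m) (Fin m) ℤ) : Set (Matrix (Fin m) (Fin m) ℤ) :=
  {U | Uᵀ * Q * U = Q ∧ IsUnit U.det}

/-- The upper triangular matrix `Q₀` of a ternary form `q`, so that `Q = Q₀ + ᵀQ₀`. -/
def upperHalf (Q : Matrix (Fin 3) (Fin 3) ℤ) : Matrix (Fin 3) (Fin 3) ℤ :=
  Matrix.of fun i j => if i < j then Q i j else if i = j then Q i i / 2 else 0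

/-- The vector `B = ᵀ(−b₂₃, b₁₃, −b₁₂)`. -/
def Bvec (Q : Matrix (Fin 3) (Fin 3) ℤ) : Fin 3 → ℤ := ![-(Q 1 2), Q 0 2, -(Q 0 1)]

/-- The matrix `N` (5.12) of the associated quaternary quadratic form `n`
(the norm form on the even Clifford subalgebra in its natural basis). -/
def Nmat (Q : Matrix (Fin 3) (Fin 3) ℤ) : Matrix (Fin 4) (Fin 4) ℤ :=
  Matrix.reindex finSumFinEquiv finSumFinEquiv
    (Matrix.fromBlocks
      (Matrix.of fun (_ : Fin 1) (_ : Fin 1) => (2 : ℤ))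
      (Matrix.of fun (_ : Fin 1) j => -(Bvec Q j))
      (Matrix.of fun i (_ : Fin 1) => -(Bvec Q i))
      ((upperHalf Q).adjugateᵀ + (upperHalf Q).adjugate))

/-- the `j`-th column of `A`. -/
def colv (A : Matrix (Fin 3) (Fin 3) ℤ) (j : Fin 3) : Fin 3 → ℤ := fun i => A i j

/-- the row `(ᵀA₃·Q₀·A₂, −ᵀA₃·Q₀·A₁, ᵀA₂·Q₀·A₁)`. -/
def zrow (Q A : Matrix (Fin 3) (Fin 3) ℤ) : Fin 3 → ℤ :=
  ![colv A 2 ⬝ᵥ (upperHalf Q).mulVec (colv A 1),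
    -(colv A 2 ⬝ᵥ (upperHalf Q).mulVec (colv A 0)),
    colv A 1 ⬝ᵥ (upperHalf Q).mulVec (colv A 0)]

/-- The matrix `Φ_A` (5.22) of the restriction of `φ_A` to the even Clifford subalgebras,
with respect to the natural bases. -/
def Phi (Q A : Matrix (Fin 3) (Fin 3) ℤ) : Matrix (Fin 4) (Fin 4) ℤ :=
  Matrix.reindex finSumFinEquiv finSumFinEquiv
    (Matrix.fromBlocks
      (Matrix.of fun (_ : Fin 1) (_ : Fin 1) => (1 : ℤ))
      (Matrix.of fun (_ : Fin 1) j => zrow Q A j)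
      (0 : Matrix (Fin 3) (Fin 1) ℤ)
      (A.adjugateᵀ))


section Aux

set_option maxHeartbeats 4000000

/-- `zrow` with the upper-triangular matrix given directly. -/
def zrowOf (Q₀ A : Matrix (Fin 3) (Fin 3) ℤ) : Fin 3 → ℤ :=
  ![colv A 2 ⬝ᵥ Q₀.mulVec (colv A 1),
    -(colv A 2 ⬝ᵥ Q₀.mulVec (colv A 0)),
    colv A 1 ⬝ᵥ Q₀.mulVec (colv A 0)]

/-- `Phi` with the upper-triangular matrix given directly. -/
def PhiOf (Q₀ A : Matrix (Fin 3) (Fin 3) ℤ) : Matrix (Fin 4) (Fin 4) ℤ :=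
  Matrix.reindex finSumFinEquiv finSumFinEquiv
    (Matrix.fromBlocks
      (Matrix.of fun (_ : Fin 1) (_ : Fin 1) => (1 : ℤ))
      (Matrix.of fun (_ : Fin 1) j => zrowOf Q₀ A j)
      (0 : Matrix (Fin 3) (Fin 1) ℤ)
      (A.adjugateᵀ))

/-- `Nmat` with the upper-triangular matrix given directly. -/
def NOf (Q₀ : Matrix (Fin 3) (Fin 3) ℤ) : Matrix (Fin 4) (Fin 4) ℤ :=
  Matrix.reindex finSumFinEquiv finSumFinEquiv
    (Matrix.fromBlocks
      (Matrix.of fun (_ : Fin 1) (_ : Fin 1) => (2 : ℤ))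
      (Matrix.of fun (_ : Fin 1) j => -(![-(Q₀ 1 2), Q₀ 0 2, -(Q₀ 0 1)] j))
      (Matrix.of fun i (_ : Fin 1) => -(![-(Q₀ 1 2), Q₀ 0 2, -(Q₀ 0 1)] i))
      (Q₀.adjugateᵀ + Q₀.adjugate))

lemma Phi_eq_PhiOf (Q A : Matrix (Fin 3) (Fin 3) ℤ) : Phi Q A = PhiOf (upperHalf Q) A := rfl

lemma e0' : (finSumFinEquiv.symm (0 : Fin 4) : (Fin 1) ⊕ (Fin 3)) = Sum.inl 0 := by decide
lemma e1' : (finSumFinEquiv.symm (1 : Fin 4) : (Fin 1) ⊕ (Fin 3)) = Sum.inr 0 := by decide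
lemma e2' : (finSumFinEquiv.symm (2 : Fin 4) : (Fin 1) ⊕ (Fin 3)) = Sum.inr 1 := by decide
lemma e3' : (finSumFinEquiv.symm (3 : Fin 4) : (Fin 1) ⊕ (Fin 3)) = Sum.inr 2 := by decide
lemma esucc' : ∀ i : Fin 3, (finSumFinEquiv.symm i.succ : (Fin 1) ⊕ (Fin 3)) = Sum.inr i := by decide

lemma Nmat_eq_NOf (Q : Matrix (Fin 3) (Fin 3) ℤ) : Nmat Q = NOf (upperHalf Q) := by
  unfold Nmat NOf Bvec
  have h12 : upperHalf Q 1 2 = Q 1 2 := by simp [upperHalf]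
  have h02 : upperHalf Q 0 2 = Q 0 2 := by simp [upperHalf]
  have h01 : upperHalf Q 0 1 = Q 0 1 := by simp [upperHalf]
  rw [h12, h02, h01]

lemma upperHalf_10 (Q : Matrix (Fin 3) (Fin 3) ℤ) : upperHalf Q 1 0 = 0 := by
  simp [upperHalf]
lemma upperHalf_20 (Q : Matrix (Fin 3) (Fin 3) ℤ) : upperHalf Q 2 0 = 0 := by
  simp [upperHalf]
lemma upperHalf_21 (Q : Matrix (Fin 3) (Fin 3) ℤ) : upperHalf Q 2 1 = 0 := by
  simp [upperHalf]

lemma upperHalf_add_transpose {Q : Matrix (Fin 3) (Fin 3) ℤ} (hQ : IsIntegralQF Q) :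
    upperHalf Q + (upperHalf Q)ᵀ = Q := by
  obtain ⟨hsym, hev⟩ := hQ
  ext i j
  have hs := hsym.apply j i
  have h0 := hev 0
  have h1 := hev 1
  have h2 := hev 2
  fin_cases i <;> fin_cases j <;>
    simp [upperHalf, Matrix.add_apply, Matrix.transpose_apply] at hs h0 h1 h2 ⊢ <;>
    omega

lemma PhiOf_det (Q₀ A : Matrix (Fin 3) (Fin 3) ℤ) : (PhiOf Q₀ A).det = A.det ^ 2 := by
  unfold PhiOf
  rw [Matrix.det_reindex_self, Matrix.det_fromBlocks_zero₂₁, Matrix.det_transpose,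
    Matrix.det_adjugate]
  simp [Matrix.det_fin_one]

lemma phiMulM (Q₀ U D : Matrix (Fin 3) (Fin 3) ℤ)
    (h10 : Q₀ 1 0 = 0) (h20 : Q₀ 2 0 = 0) (h21 : Q₀ 2 1 = 0)
    (hU : Uᵀ * (Q₀ + Q₀ᵀ) * U = Q₀ + Q₀ᵀ) :
    PhiOf Q₀ (U * D) = PhiOf Q₀ U * PhiOf Q₀ D := by
  have hE := Matrix.ext_iff.2 hU
  have hE00 := hE 0 0
  have hE01 := hE 0 1
  have hE02 := hE 0 2
  have hE11 := hE 1 1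
  have hE12 := hE 1 2
  have hE22 := hE 2 2
  simp only [Matrix.mul_apply, Matrix.add_apply, Matrix.transpose_apply, Fin.sum_univ_three,
    h10, h20, h21] at hE00 hE01 hE02 hE11 hE12 hE22
  have g00 : (Q₀ 2 2) * (U 2 0) ^ 2 + (Q₀ 1 2) * (U 1 0) * (U 2 0) + (Q₀ 1 1) * (U 1 0) ^ 2 + (Q₀ 0 2) * (U 0 0) * (U 2 0) + (Q₀ 0 1) * (U 0 0) * (U 1 0) - (Q₀ 0 0) + (Q₀ 0 0) * (U 0 0) ^ 2 = 0 := by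
    have h2x : (2:ℤ) * ((Q₀ 2 2) * (U 2 0) ^ 2 + (Q₀ 1 2) * (U 1 0) * (U 2 0) + (Q₀ 1 1) * (U 1 0) ^ 2 + (Q₀ 0 2) * (U 0 0) * (U 2 0) + (Q₀ 0 1) * (U 0 0) * (U 1 0) - (Q₀ 0 0) + (Q₀ 0 0) * (U 0 0) ^ 2) = 0 := by linear_combination hE00
    linarith
  have g01 : 2 * (Q₀ 2 2) * (U 2 0) * (U 2 1) + (Q₀ 1 2) * (U 1 1) * (U 2 0) + (Q₀ 1 2) * (U 1 0) * (U 2 1) + 2 * (Q₀ 1 1) * (U 1 0) * (U 1 1) + (Q₀ 0 2) * (U 0 1) * (U 2 0) + (Q₀ 0 2) * (U 0 0) * (U 2 1) - (Q₀ 0 1) + (Q₀ 0 1) * (U 0 1) * (U 1 0) + (Q₀ 0 1) * (U 0 0) * (U 1 1) + 2 * (Q₀ 0 0) * (U 0 0) * (U 0 1) = 0 := by linear_combination hE01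
  have g02 : 2 * (Q₀ 2 2) * (U 2 0) * (U 2 2) + (Q₀ 1 2) * (U 1 2) * (U 2 0) + (Q₀ 1 2) * (U 1 0) * (U 2 2) + 2 * (Q₀ 1 1) * (U 1 0) * (U 1 2) - (Q₀ 0 2) + (Q₀ 0 2) * (U 0 2) * (U 2 0) + (Q₀ 0 2) * (U 0 0) * (U 2 2) + (Q₀ 0 1) * (U 0 2) * (U 1 0) + (Q₀ 0 1) * (U 0 0) * (U 1 2) + 2 * (Q₀ 0 0) * (U 0 0) * (U 0 2) = 0 := by linear_combination hE02
  have g11 : (Q₀ 2 2) * (U 2 1) ^ 2 + (Q₀ 1 2) * (U 1 1) * (U 2 1) - (Q₀ 1 1) + (Q₀ 1 1) * (U 1 1) ^ 2 + (Q₀ 0 2) * (U 0 1) * (U 2 1) + (Q₀ 0 1) * (U 0 1) * (U 1 1) + (Q₀ 0 0) * (U 0 1) ^ 2 = 0 := by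
    have h2x : (2:ℤ) * ((Q₀ 2 2) * (U 2 1) ^ 2 + (Q₀ 1 2) * (U 1 1) * (U 2 1) - (Q₀ 1 1) + (Q₀ 1 1) * (U 1 1) ^ 2 + (Q₀ 0 2) * (U 0 1) * (U 2 1) + (Q₀ 0 1) * (U 0 1) * (U 1 1) + (Q₀ 0 0) * (U 0 1) ^ 2) = 0 := by linear_combination hE11
    linarith
  have g12 : 2 * (Q₀ 2 2) * (U 2 1) * (U 2 2) - (Q₀ 1 2) + (Q₀ 1 2) * (U 1 2) * (U 2 1) + (Q₀ 1 2) * (U 1 1) * (U 2 2) + 2 * (Q₀ 1 1) * (U 1 1) * (U 1 2) + (Q₀ 0 2) * (U 0 2) * (U 2 1) + (Q₀ 0 2) * (U 0 1) * (U 2 2) + (Q₀ 0 1) * (U 0 2) * (U 1 1) + (Q₀ 0 1) * (U 0 1) * (U 1 2) + 2 * (Q₀ 0 0) * (U 0 1) * (U 0 2) = 0 := by linear_combination hE12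
  have g22 : -(Q₀ 2 2) + (Q₀ 2 2) * (U 2 2) ^ 2 + (Q₀ 1 2) * (U 1 2) * (U 2 2) + (Q₀ 1 1) * (U 1 2) ^ 2 + (Q₀ 0 2) * (U 0 2) * (U 2 2) + (Q₀ 0 1) * (U 0 2) * (U 1 2) + (Q₀ 0 0) * (U 0 2) ^ 2 = 0 := by
    have h2x : (2:ℤ) * (-(Q₀ 2 2) + (Q₀ 2 2) * (U 2 2) ^ 2 + (Q₀ 1 2) * (U 1 2) * (U 2 2) + (Q₀ 1 1) * (U 1 2) ^ 2 + (Q₀ 0 2) * (U 0 2) * (U 2 2) + (Q₀ 0 1) * (U 0 2) * (U 1 2) + (Q₀ 0 0) * (U 0 2) ^ 2) = 0 := by linear_combination hE22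
    linarith
  ext i j
  fin_cases i <;> fin_cases j <;>
    simp [PhiOf, zrowOf, NOf, colv, Matrix.mulVec, dotProduct, Fin.sum_univ_three,
      Fin.sum_univ_four, Matrix.mul_apply, Matrix.adjugate_fin_three, Matrix.transpose_apply,
      Matrix.add_apply, Matrix.vecHead, Matrix.vecTail, e0', e1', e2', e3', h10, h20, h21]
  · linear_combination ((D 0 1) * (D 0 2)) * g00 + ((D 0 2) * (D 1 1)) * g01 + ((D 0 2) * (D 2 1)) * g02 + ((D 1 1) * (D 1 2)) * g11 + ((D 1 2) * (D 2 1)) * g12 + ((D 2 1) * (D 2 2)) * g22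
  · linear_combination (-(D 0 0) * (D 0 2)) * g00 + (-(D 0 2) * (D 1 0)) * g01 + (-(D 0 2) * (D 2 0)) * g02 + (-(D 1 0) * (D 1 2)) * g11 + (-(D 1 2) * (D 2 0)) * g12 + (-(D 2 0) * (D 2 2)) * g22
  · linear_combination ((D 0 0) * (D 0 1)) * g00 + ((D 0 1) * (D 1 0)) * g01 + ((D 0 1) * (D 2 0)) * g02 + ((D 1 0) * (D 1 1)) * g11 + ((D 1 1) * (D 2 0)) * g12 + ((D 2 0) * (D 2 1)) * g22
  all_goals ring

lemma phiUnitM (Q₀ U : Matrix (Fin 3) (Fin 3) ℤ)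
    (h10 : Q₀ 1 0 = 0) (h20 : Q₀ 2 0 = 0) (h21 : Q₀ 2 1 = 0)
    (hU : Uᵀ * (Q₀ + Q₀ᵀ) * U = Q₀ + Q₀ᵀ) :
    (PhiOf Q₀ U)ᵀ * NOf Q₀ * PhiOf Q₀ U = NOf Q₀ := by
  have hE := Matrix.ext_iff.2 hU
  have hE00 := hE 0 0
  have hE01 := hE 0 1
  have hE02 := hE 0 2
  have hE11 := hE 1 1
  have hE12 := hE 1 2
  have hE22 := hE 2 2
  simp only [Matrix.mul_apply, Matrix.add_apply, Matrix.transpose_apply, Fin.sum_univ_three,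
    h10, h20, h21] at hE00 hE01 hE02 hE11 hE12 hE22
  have g00 : (Q₀ 2 2) * (U 2 0) ^ 2 + (Q₀ 1 2) * (U 1 0) * (U 2 0) + (Q₀ 1 1) * (U 1 0) ^ 2 + (Q₀ 0 2) * (U 0 0) * (U 2 0) + (Q₀ 0 1) * (U 0 0) * (U 1 0) - (Q₀ 0 0) + (Q₀ 0 0) * (U 0 0) ^ 2 = 0 := by
    have h2x : (2:ℤ) * ((Q₀ 2 2) * (U 2 0) ^ 2 + (Q₀ 1 2) * (U 1 0) * (U 2 0) + (Q₀ 1 1) * (U 1 0) ^ 2 + (Q₀ 0 2) * (U 0 0) * (U 2 0) + (Q₀ 0 1) * (U 0 0) * (U 1 0) - (Q₀ 0 0) + (Q₀ 0 0) * (U 0 0) ^ 2) = 0 := by linear_combination hE00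
    linarith
  have g01 : 2 * (Q₀ 2 2) * (U 2 0) * (U 2 1) + (Q₀ 1 2) * (U 1 1) * (U 2 0) + (Q₀ 1 2) * (U 1 0) * (U 2 1) + 2 * (Q₀ 1 1) * (U 1 0) * (U 1 1) + (Q₀ 0 2) * (U 0 1) * (U 2 0) + (Q₀ 0 2) * (U 0 0) * (U 2 1) - (Q₀ 0 1) + (Q₀ 0 1) * (U 0 1) * (U 1 0) + (Q₀ 0 1) * (U 0 0) * (U 1 1) + 2 * (Q₀ 0 0) * (U 0 0) * (U 0 1) = 0 := by linear_combination hE01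
  have g02 : 2 * (Q₀ 2 2) * (U 2 0) * (U 2 2) + (Q₀ 1 2) * (U 1 2) * (U 2 0) + (Q₀ 1 2) * (U 1 0) * (U 2 2) + 2 * (Q₀ 1 1) * (U 1 0) * (U 1 2) - (Q₀ 0 2) + (Q₀ 0 2) * (U 0 2) * (U 2 0) + (Q₀ 0 2) * (U 0 0) * (U 2 2) + (Q₀ 0 1) * (U 0 2) * (U 1 0) + (Q₀ 0 1) * (U 0 0) * (U 1 2) + 2 * (Q₀ 0 0) * (U 0 0) * (U 0 2) = 0 := by linear_combination hE02
  have g11 : (Q₀ 2 2) * (U 2 1) ^ 2 + (Q₀ 1 2) * (U 1 1) * (U 2 1) - (Q₀ 1 1) + (Q₀ 1 1) * (U 1 1) ^ 2 + (Q₀ 0 2) * (U 0 1) * (U 2 1) + (Q₀ 0 1) * (U 0 1) * (U 1 1) + (Q₀ 0 0) * (U 0 1) ^ 2 = 0 := by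
    have h2x : (2:ℤ) * ((Q₀ 2 2) * (U 2 1) ^ 2 + (Q₀ 1 2) * (U 1 1) * (U 2 1) - (Q₀ 1 1) + (Q₀ 1 1) * (U 1 1) ^ 2 + (Q₀ 0 2) * (U 0 1) * (U 2 1) + (Q₀ 0 1) * (U 0 1) * (U 1 1) + (Q₀ 0 0) * (U 0 1) ^ 2) = 0 := by linear_combination hE11
    linarith
  have g12 : 2 * (Q₀ 2 2) * (U 2 1) * (U 2 2) - (Q₀ 1 2) + (Q₀ 1 2) * (U 1 2) * (U 2 1) + (Q₀ 1 2) * (U 1 1) * (U 2 2) + 2 * (Q₀ 1 1) * (U 1 1) * (U 1 2) + (Q₀ 0 2) * (U 0 2) * (U 2 1) + (Q₀ 0 2) * (U 0 1) * (U 2 2) + (Q₀ 0 1) * (U 0 2) * (U 1 1) + (Q₀ 0 1) * (U 0 1) * (U 1 2) + 2 * (Q₀ 0 0) * (U 0 1) * (U 0 2) = 0 := by linear_combination hE12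
  have g22 : -(Q₀ 2 2) + (Q₀ 2 2) * (U 2 2) ^ 2 + (Q₀ 1 2) * (U 1 2) * (U 2 2) + (Q₀ 1 1) * (U 1 2) ^ 2 + (Q₀ 0 2) * (U 0 2) * (U 2 2) + (Q₀ 0 1) * (U 0 2) * (U 1 2) + (Q₀ 0 0) * (U 0 2) ^ 2 = 0 := by
    have h2x : (2:ℤ) * (-(Q₀ 2 2) + (Q₀ 2 2) * (U 2 2) ^ 2 + (Q₀ 1 2) * (U 1 2) * (U 2 2) + (Q₀ 1 1) * (U 1 2) ^ 2 + (Q₀ 0 2) * (U 0 2) * (U 2 2) + (Q₀ 0 1) * (U 0 2) * (U 1 2) + (Q₀ 0 0) * (U 0 2) ^ 2) = 0 := by linear_combination hE22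
    linarith
  ext i j
  fin_cases i <;> fin_cases j <;>
    simp [PhiOf, zrowOf, NOf, colv, Matrix.mulVec, dotProduct, Fin.sum_univ_three,
      Fin.sum_univ_four, Matrix.mul_apply, Matrix.adjugate_fin_three, Matrix.transpose_apply,
      Matrix.add_apply, Matrix.vecHead, Matrix.vecTail, e0', e1', e2', e3', h10, h20, h21]
  · linear_combination (1) * g12
  · linear_combination (-1) * g02
  · linear_combination (1) * g01
  · linear_combination (1) * g12
  · linear_combination (2 * (Q₀ 2 2) * (U 2 2) ^ 2 + 2 * (Q₀ 1 2) * (U 1 2) * (U 2 2) + 2 * (Q₀ 1 1) * (U 1 2) ^ 2 + 2 * (Q₀ 0 2) * (U 0 2) * (U 2 2) + 2 * (Q₀ 0 1) * (U 0 2) * (U 1 2) + 2 * (Q₀ 0 0) * (U 0 2) ^ 2) * g11 + (2 * (Q₀ 1 1)) * g22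
  · linear_combination (-(Q₀ 2 2) * (U 2 2) ^ 2 - (Q₀ 1 2) * (U 1 2) * (U 2 2) - (Q₀ 1 1) * (U 1 2) ^ 2 - (Q₀ 0 2) * (U 0 2) * (U 2 2) - (Q₀ 0 1) * (U 0 2) * (U 1 2) - (Q₀ 0 0) * (U 0 2) ^ 2) * g01 + (-(Q₀ 0 1)) * g22
  · linear_combination (2 * (Q₀ 2 2) * (U 2 1) * (U 2 2) + (Q₀ 1 2) * (U 1 2) * (U 2 1) + (Q₀ 1 2) * (U 1 1) * (U 2 2) + 2 * (Q₀ 1 1) * (U 1 1) * (U 1 2) + (Q₀ 0 2) * (U 0 2) * (U 2 1) + (Q₀ 0 2) * (U 0 1) * (U 2 2) + (Q₀ 0 1) * (U 0 2) * (U 1 1) + (Q₀ 0 1) * (U 0 1) * (U 1 2) + 2 * (Q₀ 0 0) * (U 0 1) * (U 0 2)) * g01 + (-(Q₀ 2 2) * (U 2 1) ^ 2 - (Q₀ 1 2) * (U 1 1) * (U 2 1) - (Q₀ 1 1) * (U 1 1) ^ 2 - (Q₀ 0 2) * (U 0 1) * (U 2 1) - (Q₀ 0 1) * (U 0 1) *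 (U 1 1) - (Q₀ 0 0) * (U 0 1) ^ 2) * g02 + (-(Q₀ 0 2)) * g11 + ((Q₀ 0 1)) * g12
  · linear_combination (-1) * g02
  · linear_combination (-(Q₀ 2 2) * (U 2 2) ^ 2 - (Q₀ 1 2) * (U 1 2) * (U 2 2) - (Q₀ 1 1) * (U 1 2) ^ 2 - (Q₀ 0 2) * (U 0 2) * (U 2 2) - (Q₀ 0 1) * (U 0 2) * (U 1 2) - (Q₀ 0 0) * (U 0 2) ^ 2) * g01 + (-(Q₀ 0 1)) * g22
  · linear_combination (2 * (Q₀ 2 2) * (U 2 2) ^ 2 + 2 * (Q₀ 1 2) * (U 1 2) * (U 2 2) + 2 * (Q₀ 1 1) * (U 1 2) ^ 2 + 2 * (Q₀ 0 2) * (U 0 2) * (U 2 2) + 2 * (Q₀ 0 1) * (U 0 2) * (U 1 2) + 2 * (Q₀ 0 0) * (U 0 2) ^ 2) * g00 + (2 * (Q₀ 0 0)) * g22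
  · linear_combination (-2 * (Q₀ 2 2) * (U 2 1) * (U 2 2) - (Q₀ 1 2) * (U 1 2) * (U 2 1) - (Q₀ 1 2) * (U 1 1) * (U 2 2) - 2 * (Q₀ 1 1) * (U 1 1) * (U 1 2) - (Q₀ 0 2) * (U 0 2) * (U 2 1) - (Q₀ 0 2) * (U 0 1) * (U 2 2) - (Q₀ 0 1) * (U 0 2) * (U 1 1) - (Q₀ 0 1) * (U 0 1) * (U 1 2) - 2 * (Q₀ 0 0) * (U 0 1) * (U 0 2)) * g00 + (-(Q₀ 0 0)) * g12
  · linear_combination (1) * g01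
  · linear_combination (2 * (Q₀ 2 2) * (U 2 1) * (U 2 2) + (Q₀ 1 2) * (U 1 2) * (U 2 1) + (Q₀ 1 2) * (U 1 1) * (U 2 2) + 2 * (Q₀ 1 1) * (U 1 1) * (U 1 2) + (Q₀ 0 2) * (U 0 2) * (U 2 1) + (Q₀ 0 2) * (U 0 1) * (U 2 2) + (Q₀ 0 1) * (U 0 2) * (U 1 1) + (Q₀ 0 1) * (U 0 1) * (U 1 2) + 2 * (Q₀ 0 0) * (U 0 1) * (U 0 2)) * g01 + (-(Q₀ 2 2) * (U 2 1) ^ 2 - (Q₀ 1 2) * (U 1 1) * (U 2 1) - (Q₀ 1 1) * (U 1 1) ^ 2 - (Q₀ 0 2) * (U 0 1) * (U 2 1) - (Q₀ 0 1) * (U 0 1) * (U 1 1) - (Q₀ 0 0) * (U 0 1) ^ 2) * g02 + (-(Q₀ 0 2)) * g11 + ((Q₀ 0 1)) * g12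
  · linear_combination (-2 * (Q₀ 2 2) * (U 2 1) * (U 2 2) - (Q₀ 1 2) * (U 1 2) * (U 2 1) - (Q₀ 1 2) * (U 1 1) * (U 2 2) - 2 * (Q₀ 1 1) * (U 1 1) * (U 1 2) - (Q₀ 0 2) * (U 0 2) * (U 2 1) - (Q₀ 0 2) * (U 0 1) * (U 2 2) - (Q₀ 0 1) * (U 0 2) * (U 1 1) - (Q₀ 0 1) * (U 0 1) * (U 1 2) - 2 * (Q₀ 0 0) * (U 0 1) * (U 0 2)) * g00 + (-(Q₀ 0 0)) * g12
  · linear_combination (2 * (Q₀ 2 2) * (U 2 1) ^ 2 + 2 * (Q₀ 1 2) * (U 1 1) * (U 2 1) + 2 * (Q₀ 1 1) * (U 1 1) ^ 2 + 2 * (Q₀ 0 2) * (U 0 1) * (U 2 1) + 2 * (Q₀ 0 1) * (U 0 1) * (U 1 1) + 2 * (Q₀ 0 0) * (U 0 1) ^ 2) * g00 + (2 * (Q₀ 0 0)) * g11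


end Aux

section Main

lemma PhiOf_zero_zero (Q₀ X : Matrix (Fin 3) (Fin 3) ℤ) : PhiOf Q₀ X 0 0 = 1 := by
  simp [PhiOf, e0']

lemma PhiOf_zero_succ (Q₀ X : Matrix (Fin 3) (Fin 3) ℤ) (j : Fin 3) :
    PhiOf Q₀ X 0 j.succ = zrowOf Q₀ X j := by
  simp [PhiOf, e0', esucc']

lemma PhiOf_succ_zero (Q₀ X : Matrix (Fin 3) (Fin 3) ℤ) (i : Fin 3) :
    PhiOf Q₀ X i.succ 0 = 0 := by
  simp [PhiOf, e0', esucc']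

lemma PhiOf_succ_succ (Q₀ X : Matrix (Fin 3) (Fin 3) ℤ) (i j : Fin 3) :
    PhiOf Q₀ X i.succ j.succ = X.adjugate j i := by
  simp [PhiOf, esucc']

lemma smul_cancelM {c : ℤ} (hc : c ≠ 0) {X Y : Matrix (Fin 3) (Fin 3) ℤ}
    (h : c • X = c • Y) : X = Y := by
  ext i j
  have h2 := Matrix.ext_iff.2 h i j
  simp only [Matrix.smul_apply, smul_eq_mul] at h2
  exact mul_left_cancel₀ hc h2

lemma conj_cancel {D X Y : Matrix (Fin 3) (Fin 3) ℤ} (hD : D.det ≠ 0)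
    (h : Dᵀ * X * D = Dᵀ * Y * D) : X = Y := by
  have e : ∀ Z : Matrix (Fin 3) (Fin 3) ℤ,
      Matrix.adjugate Dᵀ * (Dᵀ * Z * D) * D.adjugate = (D.det * D.det) • Z := by
    intro Z
    calc Matrix.adjugate Dᵀ * (Dᵀ * Z * D) * D.adjugate
        = (Matrix.adjugate Dᵀ * Dᵀ) * (Z * (D * D.adjugate)) := by
          simp only [Matrix.mul_assoc]
      _ = (D.det • (1 : Matrix (Fin 3) (Fin 3) ℤ)) * (Z * (D.det • (1 : Matrix (Fin 3) (Fin 3) ℤ))) := by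
          rw [Matrix.adjugate_mul, Matrix.mul_adjugate, Matrix.det_transpose]
      _ = (D.det * D.det) • Z := by
          simp only [Matrix.smul_mul, Matrix.mul_smul, Matrix.one_mul, Matrix.mul_one, smul_smul]
  have h2 := congrArg (fun M => Matrix.adjugate Dᵀ * M * D.adjugate) h
  simp only [e] at h2
  exact smul_cancelM (mul_ne_zero hD hD) h2

/-- Lemma 5.3: `A ∈ E(q)·D` if and only if `Φ_A ∈ E(n)·Φ_D`. -/
theorem lemma_5_3 (Q Q'' : Matrix (Fin 3) (Fin 3) ℤ)
    (hQI : IsIntegralQF Q) (hQ''I : IsIntegralQF Q'')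
    (hQns : Q.det ≠ 0) (hQ''ns : Q''.det ≠ 0)
    (A D : Matrix (Fin 3) (Fin 3) ℤ)
    (hA : A ∈ Reps Q Q'') (hD : D ∈ Reps Q Q'') :
    (∃ U ∈ UnitsOf Q, A = U * D) ↔
      (∃ V ∈ UnitsOf (Nmat Q), Phi Q A = V * Phi Q D) := by
  have hQeq := upperHalf_add_transpose hQI
  have hA' : Aᵀ * Q * A = Q'' := hA
  have hD' : Dᵀ * Q * D = Q'' := hD
  have hdetA : A.det * A.det * Q.det = Q''.det := by
    have h := congrArg Matrix.det hA'
    rw [Matrix.det_mul, Matrix.det_mul, Matrix.det_transpose] at h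
    linear_combination h
  have hdetD : D.det * D.det * Q.det = Q''.det := by
    have h := congrArg Matrix.det hD'
    rw [Matrix.det_mul, Matrix.det_mul, Matrix.det_transpose] at h
    linear_combination h
  have hDne : D.det ≠ 0 := by
    intro h0
    rw [h0] at hdetD
    apply hQ''ns
    linarith
  constructor
  · rintro ⟨U, ⟨hUQ, hUdet⟩, hAUD⟩
    have hU' : Uᵀ * (upperHalf Q + (upperHalf Q)ᵀ) * U = upperHalf Q + (upperHalf Q)ᵀ := by
      rw [hQeq]; exact hUQ
    refine ⟨PhiOf (upperHalf Q) U, ⟨?_, ?_⟩, ?_⟩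
    · rw [Nmat_eq_NOf]
      exact phiUnitM _ _ (upperHalf_10 Q) (upperHalf_20 Q) (upperHalf_21 Q) hU'
    · rw [PhiOf_det]
      exact hUdet.pow 2
    · rw [hAUD, Phi_eq_PhiOf, Phi_eq_PhiOf]
      exact phiMulM _ _ _ (upperHalf_10 Q) (upperHalf_20 Q) (upperHalf_21 Q) hU'
  · rintro ⟨V, ⟨hVN, hVdet⟩, hPhi⟩
    have hsq : (A.det - D.det) * (A.det + D.det) = 0 := by
      have h2 : (A.det * A.det - D.det * D.det) * Q.det = 0 := by
        linear_combination hdetA - hdetD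
      have h3 := (mul_eq_zero.1 h2).resolve_right hQns
      linear_combination h3
    obtain ⟨s, hs1, hsA⟩ : ∃ s : ℤ, IsUnit s ∧ A.det = s * D.det := by
      rcases mul_eq_zero.1 hsq with h | h
      · exact ⟨1, isUnit_one, by linarith⟩
      · exact ⟨-1, isUnit_one.neg, by linarith⟩
    have hPhi' : PhiOf (upperHalf Q) A = V * PhiOf (upperHalf Q) D := by
      rw [← Phi_eq_PhiOf, ← Phi_eq_PhiOf]; exact hPhi
    have hent := Matrix.ext_iff.2 hPhi'
    have hV0 : ∀ i : Fin 3, V i.succ 0 = 0 := by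
      intro i
      have h := hent i.succ 0
      rw [PhiOf_succ_zero, Matrix.mul_apply, Fin.sum_univ_succ] at h
      simp only [PhiOf_zero_zero, PhiOf_succ_zero, mul_one, mul_zero,
        Finset.sum_const_zero, add_zero] at h
      exact h.symm
    set W : Matrix (Fin 3) (Fin 3) ℤ := Matrix.of fun i j => V i.succ j.succ with hWdef
    have hW : W * D.adjugateᵀ = A.adjugateᵀ := by
      ext i j
      have h := hent i.succ j.succ
      rw [PhiOf_succ_succ, Matrix.mul_apply, Fin.sum_univ_succ, hV0 i] at h
      simp only [PhiOf_succ_succ, PhiOf_zero_succ, zero_mul, zero_add] at h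
      rw [Matrix.mul_apply]
      simp only [hWdef, Matrix.of_apply, Matrix.transpose_apply]
      exact h.symm
    have hadj := congrArg Matrix.adjugate hW
    rw [Matrix.adjugate_mul_distrib] at hadj
    have hcard : (Fintype.card (Fin 3)) - 2 = 1 := by simp
    have hDD : Matrix.adjugate (D.adjugateᵀ) = (D.det • D)ᵀ := by
      rw [← Matrix.adjugate_transpose, Matrix.adjugate_adjugate _ (by simp), hcard, pow_one]
    have hAA : Matrix.adjugate (A.adjugateᵀ) = (A.det • A)ᵀ := by
      rw [← Matrix.adjugate_transpose, Matrix.adjugate_adjugate _ (by simp), hcard, pow_one]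
    rw [hDD, hAA] at hadj
    have hkey : D.det • (W.adjugateᵀ * D) = A.det • A := by
      have h := congrArg Matrix.transpose hadj
      simp only [Matrix.transpose_mul, Matrix.transpose_transpose, Matrix.mul_smul] at h
      exact h
    have hscal : A.det = D.det * s := by linarith [hsA, mul_comm s D.det]
    have hkey2 : D.det • (W.adjugateᵀ * D) = D.det • (s • A) := by
      rw [hkey, hscal, smul_smul]
    have hXD : W.adjugateᵀ * D = s • A := smul_cancelM hDne hkey2
    have hss : s * s = 1 := by
      rcases Int.isUnit_iff.1 hs1 with h | h <;> rw [h] <;> ring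
    have hAUD : A = (s • W.adjugateᵀ) * D := by
      rw [Matrix.smul_mul, hXD, smul_smul, hss, one_smul]
    refine ⟨s • W.adjugateᵀ, ⟨?_, ?_⟩, hAUD⟩
    · apply conj_cancel hDne
      have h1 : ((s • W.adjugateᵀ) * D)ᵀ * Q * ((s • W.adjugateᵀ) * D) = Q'' := by
        rw [← hAUD]; exact hA'
      calc Dᵀ * ((s • W.adjugateᵀ)ᵀ * Q * (s • W.adjugateᵀ)) * D
          = ((s • W.adjugateᵀ) * D)ᵀ * Q * ((s • W.adjugateᵀ) * D) := by
            rw [Matrix.transpose_mul]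
            simp only [Matrix.mul_assoc]
        _ = Q'' := h1
        _ = Dᵀ * Q * D := hD'.symm
    · have h1 : (s • W.adjugateᵀ).det * D.det = A.det := by
        rw [← Matrix.det_mul, ← hAUD]
      have h2 : (s • W.adjugateᵀ).det = s := by
        apply mul_right_cancel₀ hDne
        rw [h1, hsA]
      rw [h2]
      exact hs1

end Main
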